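/- arXiv:1602.06386 — 2 statements merged into one kernel-verified Lean document; each statement's English description precedes it below -/
import Mathlib

section
/- Let k be a field, R = {(f, g) ∈ k[[t]] × k[[s]] : f(0) = g(0)}, B₁ = k[[t]] and B₂ = k[[s]] the R-modules given by the projections. Then for all integers j ≥ 0 and m ≥ 1: Ext^{2j+1}_R(B₁, B₂) ≅ k and Ext^{2m}_R(B₁, B₂) = 0. -/
open PowerSeries

noncomputable section

/-- The local ring of a node: pairs `(f, g) ∈ k[[t]] × k[[s]]` with `f(0) = g(0)`. -/
def nodeRing (k : Type) [Field k] : Subring (PowerSeries k × PowerSeries k) where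
  carrier := {p | constantCoeff (R := k) p.1 = constantCoeff (R := k) p.2}
  mul_mem' := by
    intro a b ha hb
    simp only [Set.mem_setOf_eq, Prod.fst_mul, Prod.snd_mul, map_mul] at *
    rw [ha, hb]
  one_mem' := by simp
  add_mem' := by
    intro a b ha hb
    simp only [Set.mem_setOf_eq, Prod.fst_add, Prod.snd_add, map_add] at *
    rw [ha, hb]
  zero_mem' := by simp
  neg_mem' := by
    intro a ha
    simp only [Set.mem_setOf_eq, Prod.fst_neg, Prod.snd_neg, map_neg] at *
    rw [ha]

variable (k : Type) [Field k]

/-- The first branch `B₁ = k[[t]]` as a module over the node ring (via the first projection). -/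
def B1 : Type := PowerSeries k

/-- The second branch `B₂ = k[[s]]` as a module over the node ring (via the second projection). -/
def B2 : Type := PowerSeries k

instance : CommRing (B1 k) := inferInstanceAs (CommRing (PowerSeries k))
instance : CommRing (B2 k) := inferInstanceAs (CommRing (PowerSeries k))

/-- The first projection `nodeRing k →+* k[[t]]`. -/
def nodeProj1 : nodeRing k →+* PowerSeries k :=
  (RingHom.fst (PowerSeries k) (PowerSeries k)).comp (nodeRing k).subtype

/-- The second projection `nodeRing k →+* k[[s]]`. -/
def nodeProj2 : nodeRing k →+* PowerSeries k :=
  (RingHom.snd (PowerSeries k) (PowerSeries k)).comp (nodeRing k).subtype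

instance : Module (nodeRing k) (B1 k) :=
  Module.compHom (PowerSeries k) (nodeProj1 k)

instance : Module (nodeRing k) (B2 k) :=
  Module.compHom (PowerSeries k) (nodeProj2 k)



/-- The residue field `k` of the node ring, as a module over it. -/
local instance : Module (nodeRing k) k :=
  Module.compHom k ((constantCoeff (R := k)).comp (nodeProj1 k))

open CategoryTheory Opposite

open Limits

/-!
Over the node ring `R`, the branch `B₁ ≅ R/(t₂)` has the `2`-periodic free resolution
`⋯ → R --t₁--> R --t₂--> R → B₁`, which is exact because the annihilator of `t₁` is `(t₂)` and
vice versa. Since `Hom_R(R, B₂) ≅ B₂`, and `t₁` acts on `B₂ = k⟦s⟧` as `0` while `t₂` acts as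
multiplication by `s`, `Hom_R(−, B₂)` turns it into `B₂ --s--> B₂ --0--> B₂ --s--> ⋯`.
Multiplication by `s` is injective with cokernel `k`, so the odd cohomology is `k` and the
positive even cohomology vanishes.
-/

universe u

section PeriodicResolution

variable {R : Type u} [CommRing R] (a b : R)

/-- `⋯ --b--> R --a--> R --b--> R --a--> R`, with `R` in every degree. -/
abbrev periodicComplex (hab : a * b = 0) : ChainComplex (ModuleCat.{u} R) ℕ :=
  HomologicalComplex.alternatingConst (ModuleCat.of R R)
    (φ := ModuleCat.ofHom (LinearMap.mulLeft R b)) (ψ := ModuleCat.ofHom (LinearMap.mulLeft R a))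
    (by ext; simp [hab]) (by ext; simp [mul_comm b a, hab])
    fun _ _ => ComplexShape.down_nat_odd_add

lemma periodicComplex_d_apply (hab : a * b = 0) (n : ℕ) (x : R) :
    (periodicComplex a b hab).d (n + 1) n x = (if Even (n + 1) then b else a) * x := by
  split_ifs with h <;> simp [h] <;> rfl

/-- `N --a--> N --b--> N --a--> ⋯`, with `N` in every degree. -/
abbrev periodicCochainComplex (hab : a * b = 0) (N : Type u) [AddCommGroup N] [Module R N] :
    CochainComplex (ModuleCat.{u} R) ℕ :=
  HomologicalComplex.alternatingConst (ModuleCat.of R N)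
    (φ := ModuleCat.ofHom (LinearMap.lsmul R N a)) (ψ := ModuleCat.ofHom (LinearMap.lsmul R N b))
    (by ext; simp [smul_smul, hab]) (by ext; simp [smul_smul, mul_comm b a, hab])
    fun _ _ => ComplexShape.up_nat_odd_add

variable {M : Type u} [AddCommGroup M] [Module R M]

/-- The annihilators of `a` and `b` are `(b)` and `(a)`, and `π` identifies `M` with `R/(a)`. -/
structure IsPeriodicPresentation (π : R →ₗ[R] M) : Prop where
  a_mul_eq_zero_iff : ∀ x, a * x = 0 ↔ b ∣ x
  b_mul_eq_zero_iff : ∀ x, b * x = 0 ↔ a ∣ x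
  surjective : Function.Surjective π
  eq_zero_iff : ∀ x, π x = 0 ↔ a ∣ x

namespace IsPeriodicPresentation

variable {a b} {π : R →ₗ[R] M}

lemma mul_eq_zero (h : IsPeriodicPresentation a b π) : a * b = 0 :=
  (h.a_mul_eq_zero_iff b).2 dvd_rfl

variable (h : IsPeriodicPresentation a b π)

def toSingle₀ :
    periodicComplex a b h.mul_eq_zero ⟶
      (ChainComplex.single₀ (ModuleCat.{u} R)).obj (ModuleCat.of R M) :=
  ((periodicComplex a b h.mul_eq_zero).toSingle₀Equiv _).symm
    ⟨ModuleCat.ofHom π, by ext; exact (h.eq_zero_iff _).2 (dvd_mul_right a _)⟩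

theorem quasiIso_toSingle₀ : QuasiIso h.toSingle₀ where
  quasiIsoAt n := by
    cases n with
    | zero =>
      rw [ChainComplex.quasiIsoAt₀_iff, ShortComplex.quasiIso_iff_of_zeros' _ rfl rfl rfl]
      refine ⟨?_, (ModuleCat.epi_iff_surjective _).2 h.surjective⟩
      rw [ShortComplex.moduleCat_exact_iff]
      intro x hx
      obtain ⟨y, rfl⟩ := (h.eq_zero_iff x).1 hx
      exact ⟨y, rfl⟩
    | succ n =>
      rw [quasiIsoAt_iff_exactAt' (hL := ChainComplex.exactAt_succ_single_obj ..),
        HomologicalComplex.exactAt_iff' _ (n + 2) (n + 1) n (by simp) (by simp),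
        ShortComplex.moduleCat_exact_iff]
      intro (x : R) hx
      change (periodicComplex a b h.mul_eq_zero).d (n + 1) n x = 0 at hx
      change ∃ y : R, (periodicComplex a b h.mul_eq_zero).d (n + 2) (n + 1) y = x
      simp only [periodicComplex_d_apply, Nat.even_add_one (n := n + 1)] at hx ⊢
      split_ifs at hx ⊢
      · exact (h.b_mul_eq_zero_iff x).1 hx |>.imp fun _ => Eq.symm
      · exact (h.a_mul_eq_zero_iff x).1 hx |>.imp fun _ => Eq.symm

def projectiveResolution : ProjectiveResolution (ModuleCat.of R M) where
  complex := periodicComplex a b h.mul_eq_zero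
  projective _ := (IsProjective.iff_projective R).1 inferInstance
  π := h.toSingle₀
  quasiIso := h.quasiIso_toSingle₀

end IsPeriodicPresentation

variable {a b} in
def linearYonedaObjPeriodicComplexIso (hab : a * b = 0) (N : Type u) [AddCommGroup N]
    [Module R N] :
    (periodicComplex a b hab).linearYonedaObj R (ModuleCat.of R N) ≅
      periodicCochainComplex a b hab N :=
  HomologicalComplex.Hom.isoOfComponents
    (fun _ => (ModuleCat.homLinearEquiv.trans (LinearMap.ringLmapEquivSelf R R N)).toModuleIso) <| by
    rintro i j ⟨rfl⟩
    ext (f : ModuleCat.of R R ⟶ ModuleCat.of R N)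
    by_cases h : Even i <;> simp only [h, Nat.even_add_one, not_true, not_false_eq_true,
      HomologicalComplex.alternatingConst_d, ChainComplex.linearYonedaObj_d, if_true, if_false,
      ComplexShape.up_Rel, ComplexShape.down_Rel]
    all_goals exact (map_smul f.hom _ (1 : R)).symm

end PeriodicResolution

namespace CategoryTheory.ShortComplex

variable {R : Type u} [CommRing R]

def moduleCatHomologyIsoOfGEqZero (S : ShortComplex (ModuleCat.{u} R)) (hg : S.g = 0)
    {Q : Type u} [AddCommGroup Q] [Module R Q] (q : S.X₂ →ₗ[R] Q) (hq : Function.Surjective q)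
    (hker : LinearMap.ker q = LinearMap.range S.f.hom) : S.homology ≅ ModuleCat.of R Q :=
  have hfq : S.f ≫ ModuleCat.ofHom q = 0 := by
    ext x
    exact hker.ge ⟨x, rfl⟩
  have hexact : (ShortComplex.mk _ _ hfq).Exact :=
    (moduleCat_exact_iff_range_eq_ker _).2 hker.symm
  have : Epi (ModuleCat.ofHom q) := (ModuleCat.epi_iff_surjective _).2 hq
  (LeftHomologyData.ofIsColimitCokernelCofork S hg _ hexact.gIsCokernel).homologyIso

end CategoryTheory.ShortComplex

namespace IsPeriodicPresentation

variable {R : Type u} [CommRing R] {a b : R} {M : Type u} [AddCommGroup M] [Module R M]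
  {π : R →ₗ[R] M} (h : IsPeriodicPresentation a b π) (N : Type u) [AddCommGroup N] [Module R N]

def extIso (n : ℕ) :
    ((Ext R (ModuleCat.{u} R) n).obj (op (ModuleCat.of R M))).obj (ModuleCat.of R N) ≅
      (periodicCochainComplex a b h.mul_eq_zero N).homology n :=
  h.projectiveResolution.isoExt n _ ≪≫
    HomologicalComplex.homologyMapIso (linearYonedaObjPeriodicComplexIso h.mul_eq_zero N) n

variable {N}

def extOddIsoOfSMulEqZero (hbN : ∀ y : N, b • y = 0) {Q : Type u} [AddCommGroup Q] [Module R Q]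
    (q : N →ₗ[R] Q) (hq : Function.Surjective q)
    (hqker : LinearMap.ker q = LinearMap.range (LinearMap.lsmul R N a)) (j : ℕ) :
    ((Ext R (ModuleCat.{u} R) (2 * j + 1)).obj (op (ModuleCat.of R M))).obj (ModuleCat.of R N) ≅
      ModuleCat.of R Q :=
  h.extIso N (2 * j + 1) ≪≫
    HomologicalComplex.alternatingConstHomologyIsoOdd _ _ _ _ (by simp) (by simp) (by simp) ≪≫
    ShortComplex.moduleCatHomologyIsoOfGEqZero _ (by ext; exact hbN _) q hq hqker

theorem isZero_ext_even_of_isSMulRegular (h : IsPeriodicPresentation a b π)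
    (haN : IsSMulRegular N a) {m : ℕ} (hm : m ≠ 0) :
    IsZero (((Ext R (ModuleCat.{u} R) (2 * m)).obj (op (ModuleCat.of R M))).obj
      (ModuleCat.of R N)) := by
  obtain ⟨m, rfl⟩ := Nat.exists_eq_succ_of_ne_zero hm
  rw [show 2 * (m + 1) = 2 * m + 1 + 1 by ring]
  refine IsZero.of_iso ?_ (h.extIso N _ ≪≫ HomologicalComplex.alternatingConstHomologyIsoEven
    _ _ _ _ (by simp) (by simp) ⟨m + 1, by ring⟩)
  rw [← ShortComplex.exact_iff_isZero_homology, ShortComplex.moduleCat_exact_iff]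
  intro y (hy : a • y = 0)
  obtain rfl : y = 0 := haN (hy.trans (smul_zero a).symm)
  exact ⟨0, map_zero _⟩

end IsPeriodicPresentation

namespace nodeRing

variable {k} in
@[simp]
lemma mem_iff {p : k⟦X⟧ × k⟦X⟧} : p ∈ nodeRing k ↔ constantCoeff p.1 = constantCoeff p.2 :=
  Iff.rfl

def t₁ : nodeRing k := ⟨(X, 0), by simp⟩

def t₂ : nodeRing k := ⟨(0, X), by simp⟩

variable {k}

def liftSnd (g : k⟦X⟧) : nodeRing k := ⟨(C (constantCoeff g), g), by simp⟩

def liftFst (f : k⟦X⟧) : nodeRing k := ⟨(f, C (constantCoeff f)), by simp⟩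

lemma t₂_mul_t₁ : t₂ k * t₁ k = 0 := by
  ext <;> simp [t₁, t₂]

lemma t₁_mul_eq_zero_iff (x : nodeRing k) : t₁ k * x = 0 ↔ (x : k⟦X⟧ × k⟦X⟧).1 = 0 := by
  simp [t₁, ← Subtype.coe_inj, Prod.ext_iff]

lemma t₂_mul_eq_zero_iff (x : nodeRing k) : t₂ k * x = 0 ↔ (x : k⟦X⟧ × k⟦X⟧).2 = 0 := by
  simp [t₂, ← Subtype.coe_inj, Prod.ext_iff]

lemma t₂_dvd_of_fst_eq_zero {x : nodeRing k} (hx : (x : k⟦X⟧ × k⟦X⟧).1 = 0) : t₂ k ∣ x := by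
  obtain ⟨⟨f, g⟩, hfg⟩ := x
  obtain ⟨g', rfl⟩ := X_dvd_iff.2 (hfg.symm.trans (by simp [show f = 0 from hx]))
  exact ⟨liftSnd g', by ext <;> simp [t₂, liftSnd, show f = 0 from hx]⟩

lemma t₁_dvd_of_snd_eq_zero {x : nodeRing k} (hx : (x : k⟦X⟧ × k⟦X⟧).2 = 0) : t₁ k ∣ x := by
  obtain ⟨⟨f, g⟩, hfg⟩ := x
  obtain ⟨f', rfl⟩ := X_dvd_iff.2 (hfg.trans (by simp [show g = 0 from hx]))
  exact ⟨liftFst f', by ext <;> simp [t₁, liftFst, show g = 0 from hx]⟩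

variable (k) in
def toB1 : nodeRing k →ₗ[nodeRing k] B1 k where
  toFun := nodeProj1 k
  map_add' := map_add _
  map_smul' := map_mul _

variable (k) in
lemma isPeriodicPresentation_toB1 : IsPeriodicPresentation (t₂ k) (t₁ k) (toB1 k) where
  a_mul_eq_zero_iff x := ⟨fun hx => t₁_dvd_of_snd_eq_zero ((t₂_mul_eq_zero_iff x).1 hx),
    by rintro ⟨y, rfl⟩; rw [← mul_assoc, t₂_mul_t₁, zero_mul]⟩
  b_mul_eq_zero_iff x := ⟨fun hx => t₂_dvd_of_fst_eq_zero ((t₁_mul_eq_zero_iff x).1 hx),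
    by rintro ⟨y, rfl⟩; rw [mul_left_comm, ← mul_assoc, t₂_mul_t₁, zero_mul]⟩
  surjective f := ⟨liftFst f, rfl⟩
  eq_zero_iff x := ⟨t₂_dvd_of_fst_eq_zero, by rintro ⟨y, rfl⟩; exact zero_mul (M₀ := k⟦X⟧) _⟩

lemma t₁_smul_B2 (y : B2 k) : t₁ k • y = 0 :=
  zero_mul (M₀ := k⟦X⟧) y

lemma isSMulRegular_t₂_B2 : IsSMulRegular (B2 k) (t₂ k) :=
  fun _ _ h => mul_left_cancel₀ (M₀ := k⟦X⟧) X_ne_zero h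

variable (k) in
def constantCoeffB2 : B2 k →ₗ[nodeRing k] k where
  toFun := constantCoeff (R := k)
  map_add' := map_add _
  map_smul' r y := by
    change constantCoeff ((r : k⟦X⟧ × k⟦X⟧).2 * show k⟦X⟧ from y) =
      constantCoeff (r : k⟦X⟧ × k⟦X⟧).1 * constantCoeff (show k⟦X⟧ from y)
    rw [map_mul, mem_iff.1 r.2]

lemma constantCoeffB2_surjective : Function.Surjective (constantCoeffB2 k) :=
  fun c => ⟨C c, constantCoeff_C c⟩

lemma ker_constantCoeffB2 :
    LinearMap.ker (constantCoeffB2 k) =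
      LinearMap.range (LinearMap.lsmul (nodeRing k) (B2 k) (t₂ k)) := by
  ext (y : k⟦X⟧)
  exact ⟨fun h => (X_dvd_iff.2 h).imp fun _ => Eq.symm, fun ⟨z, hz⟩ => X_dvd_iff.1 ⟨z, hz.symm⟩⟩

end nodeRing

open nodeRing in
theorem ext_branch1_branch2 (j m : ℕ) (hm : 1 ≤ m) :
    Nonempty
      ((((Ext (nodeRing k) (ModuleCat (nodeRing k)) (2 * j + 1)).obj
            (op (ModuleCat.of (nodeRing k) (B1 k)))).obj (ModuleCat.of (nodeRing k) (B2 k))) ≅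
        ModuleCat.of (nodeRing k) k) ∧
    Limits.IsZero
      ((((Ext (nodeRing k) (ModuleCat (nodeRing k)) (2 * m)).obj
            (op (ModuleCat.of (nodeRing k) (B1 k)))).obj (ModuleCat.of (nodeRing k) (B2 k))) ) :=
  ⟨⟨(isPeriodicPresentation_toB1 k).extOddIsoOfSMulEqZero t₁_smul_B2 (constantCoeffB2 k)
      constantCoeffB2_surjective ker_constantCoeffB2 j⟩,
    (isPeriodicPresentation_toB1 k).isZero_ext_even_of_isSMulRegular isSMulRegular_t₂_B2
      (by omega)⟩

end
end

section
/- Let k be a field, A = k[[x]], R = A[z]/(z²), and M a finitely generated R-module with no x-torsion (i.e. x acts injectively on M). Then Ext¹_R(M, R) = 0, and consequently M is reflexive: the canonical map M → Hom_R(Hom_R(M, R), R) is an isomorphism. -/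
/-!
The dual numbers `A[ε]` form a Frobenius algebra over `A`: reading off the `ε`-coefficient
identifies `Hom_{A[ε]}(N, A[ε])` with `Hom_A(N, A)` for every `A[ε]`-module `N`, the
`1`-coefficient being recovered as `fst (φ n) = snd (φ (ε • n))`. Over the discrete valuation ring
`A = k⟦x⟧`, a finitely generated module on which `x` acts injectively is free, so `M` is a free
`A`-module of finite rank. Hence every surjection `P ↠ M` splits over `A`, so `A[ε]`-functionals
on its kernel extend to `P`, which kills `Ext¹(M, A[ε])`; and the evaluation map of `M` over
`A[ε]` is bijective because that of the free `A`-module `M` is.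
-/

open CategoryTheory Opposite

noncomputable section

variable (k : Type) [Field k]

/-- `A = k[[x]]`. -/
abbrev Ak := PowerSeries k

open DualNumber Function

universe u

theorem isZero_ext_one_of_surjective_lcomp_ker_subtype {R : Type u} [CommRing R]
    {M N : Type u} [AddCommGroup M] [Module R M] [AddCommGroup N] [Module R N]
    (h : ∀ (P : Type u) [AddCommGroup P] [Module R P] [Module.Projective R P]
      (π : P →ₗ[R] M), Surjective π →
        Surjective ((LinearMap.ker π).subtype.lcomp R N)) :
    Limits.IsZero (((Ext R (ModuleCat R) 1).obj (op (ModuleCat.of R M))).obj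
      (ModuleCat.of R N)) := by
  let P := projectiveResolution (ModuleCat.of R M)
  refine Limits.IsZero.of_iso ?_ (P.isoExt 1 (ModuleCat.of R N))
  rw [← HomologicalComplex.exactAt_iff_isZero_homology,
    HomologicalComplex.exactAt_iff' _ 0 1 2 (by simp) (by simp),
    ShortComplex.moduleCat_exact_iff]
  -- A cocycle `α` kills `im d₂ = ker d₁`, so it factors through `d₁ : P₁ ↠ ker π₀`;
  -- any extension of that factorisation to `P₀` is a cochain with coboundary `α`.
  intro α hα
  change P.complex.X 1 ⟶ ModuleCat.of R N at α
  change P.complex.d 2 1 ≫ α = 0 at hα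
  let π₀ : P.complex.X 0 →ₗ[R] M := (P.π.f 0).hom
  have hπ₀ : Surjective π₀ := (ModuleCat.epi_iff_surjective _).1 inferInstance
  have hd : ∀ p, π₀ ((P.complex.d 1 0).hom p) = 0 := fun p =>
    congr($(P.complex_d_comp_π_f_zero).hom p)
  let d : P.complex.X 1 →ₗ[R] LinearMap.ker π₀ :=
    LinearMap.codRestrict _ (P.complex.d 1 0).hom hd
  have hd_surj : Surjective d := fun y => by
    obtain ⟨x, hx⟩ := (ShortComplex.moduleCat_exact_iff _).1 P.exact₀ y.1 y.2
    exact ⟨x, Subtype.ext hx⟩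
  have hα_ker : LinearMap.ker d ≤ LinearMap.ker α.hom := fun x hx => by
    obtain ⟨y, rfl⟩ := (ShortComplex.moduleCat_exact_iff _).1 (P.exact_succ 0) x
      (congr_arg Subtype.val hx)
    exact congr($(hα).hom y)
  obtain ⟨ψ, hψ⟩ := h _ π₀ hπ₀
    ((LinearMap.ker d).liftQ α.hom hα_ker ∘ₗ
      (d.quotKerEquivOfSurjective hd_surj).symm.toLinearMap)
  refine ⟨ModuleCat.ofHom ψ, ModuleCat.hom_ext (LinearMap.ext fun x => ?_)⟩
  show ψ (d x) = α x
  simpa using LinearMap.congr_fun hψ (d x)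

theorem Module.isTorsionFree_of_isSMulRegular_irreducible {A M : Type*} [CommRing A] [IsDomain A]
    [IsDiscreteValuationRing A] [AddCommGroup M] [Module A M] {ϖ : A} (hϖ : Irreducible ϖ)
    (h : IsSMulRegular M ϖ) : Module.IsTorsionFree A M where
  isSMulRegular r hr := by
    obtain ⟨n, u, rfl⟩ := IsDiscreteValuationRing.eq_unit_mul_pow_irreducible hr.ne_zero hϖ
    exact u.isUnit.isSMulRegular M |>.mul (h.pow n)

namespace DualNumber

variable {A : Type*} [CommRing A]

instance : Module.Finite A A[ε] :=
  .of_surjective ((Algebra.linearMap A A[ε]).coprod (TrivSqZeroExt.inrHom A A)) fun r =>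
    ⟨(r.fst, r.snd), TrivSqZeroExt.inl_fst_add_inr_snd_eq r⟩

variable {N : Type*} [AddCommGroup N] [Module A[ε] N]

theorem fst_dual_apply (φ : Module.Dual A[ε] N) (n : N) :
    (φ n).fst = (φ ((ε : A[ε]) • n)).snd := by
  simp [map_smul, smul_eq_mul]

theorem dual_ext {φ ψ : Module.Dual A[ε] N} (h : ∀ n, (φ n).snd = (ψ n).snd) : φ = ψ :=
  LinearMap.ext fun n => TrivSqZeroExt.ext (by rw [fst_dual_apply, fst_dual_apply, h]) (h n)

variable [Module A N] [IsScalarTower A A[ε] N]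

theorem smul_eq_fst_smul_add_snd_smul_eps_smul (r : A[ε]) (n : N) :
    r • n = r.fst • n + r.snd • (ε : A[ε]) • n := by
  conv_lhs => rw [← TrivSqZeroExt.inl_fst_add_inr_snd_eq r]
  rw [add_smul, ← TrivSqZeroExt.algebraMap_eq_inl, algebraMap_smul, inr_eq_smul_eps, smul_assoc]

variable (A N) in
def baseDualEquiv : Module.Dual A[ε] N ≃ₗ[A] Module.Dual A N where
  toFun φ := TrivSqZeroExt.sndHom A A ∘ₗ φ.restrictScalars A
  invFun l :=
    { toFun n := TrivSqZeroExt.inl (l ((ε : A[ε]) • n)) + TrivSqZeroExt.inr (l n)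
      map_add' m n := by ext <;> simp
      map_smul' r n := by
        rw [smul_eq_fst_smul_add_snd_smul_eps_smul r n]
        ext
        · simp [smul_comm (ε : A[ε]) r.fst n, smul_comm (ε : A[ε]) r.snd, smul_smul]
        · simp }
  map_add' φ ψ := by ext; simp
  map_smul' a φ := by ext; simp
  left_inv φ := dual_ext fun n => by simp
  right_inv l := by ext; simp

@[simp]
theorem baseDualEquiv_apply (φ : Module.Dual A[ε] N) (n : N) :
    baseDualEquiv A N φ n = (φ n).snd := rfl

@[simp]
theorem snd_baseDualEquiv_symm_apply (l : Module.Dual A N) (n : N) :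
    ((baseDualEquiv A N).symm l n).snd = l n := by
  simp [baseDualEquiv]

theorem dualMap_surjective_of_leftInverse {K : Type*} [AddCommGroup K] [Module A[ε] K]
    [Module A K] [IsScalarTower A A[ε] K] (j : K →ₗ[A[ε]] N) (r : N →ₗ[A] K)
    (hr : ∀ y, r (j y) = y) : Surjective j.dualMap := fun φ =>
  ⟨(baseDualEquiv A N).symm (baseDualEquiv A K φ ∘ₗ r), dual_ext fun y => by simp [hr]⟩

theorem dualMap_ker_subtype_surjective {M : Type*} [AddCommGroup M] [Module A[ε] M]
    [Module A M] [IsScalarTower A A[ε] M] [Module.Projective A M]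
    (π : N →ₗ[A[ε]] M) (hπ : Surjective π) : Surjective (LinearMap.ker π).subtype.dualMap := by
  obtain ⟨s, hs⟩ := Module.projective_lifting_property (π.restrictScalars A) LinearMap.id hπ
  have hs' : ∀ m, π (s m) = m := LinearMap.congr_fun hs
  let r : N →ₗ[A] LinearMap.ker π :=
    LinearMap.codRestrict ((LinearMap.ker π).restrictScalars A)
      (LinearMap.id - s ∘ₗ π.restrictScalars A) fun n => by simp [hs']
  exact dualMap_surjective_of_leftInverse _ r fun y =>
    Subtype.ext (show (y : N) - s (π y) = y by simp)

theorem bijective_dual_eval_of_isReflexive [Module.IsReflexive A N] :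
    Bijective (Module.Dual.eval A[ε] N) := by
  refine ⟨fun m m' h => (Module.bijective_dual_eval A N).1 (LinearMap.ext fun l => ?_),
    fun Ξ => ?_⟩
  · simpa using congr(((($h) ((baseDualEquiv A N).symm l)).snd))
  · obtain ⟨m, hm⟩ := (Module.bijective_dual_eval A N).2
      (baseDualEquiv A _ Ξ ∘ₗ (baseDualEquiv A N).symm.toLinearMap)
    refine ⟨m, dual_ext fun φ => ?_⟩
    simpa using LinearMap.congr_fun hm (baseDualEquiv A N φ)

end DualNumber

theorem torsionFree_ext_vanishing_and_reflexive
    (M : Type) [AddCommGroup M] [Module (DualNumber (Ak k)) M]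
    [Module.Finite (DualNumber (Ak k)) M]
    (hx : Function.Injective
      (fun m : M => ((TrivSqZeroExt.inl (PowerSeries.X : Ak k)) : DualNumber (Ak k)) • m)) :
    Limits.IsZero
      ((((Ext (DualNumber (Ak k)) (ModuleCat (DualNumber (Ak k))) 1).obj
          (op (ModuleCat.of (DualNumber (Ak k)) M))).obj
          (ModuleCat.of (DualNumber (Ak k)) (DualNumber (Ak k))))) ∧
    Function.Bijective (Module.Dual.eval (DualNumber (Ak k)) M) := by
  let _ : Module (Ak k) M := Module.compHom M (algebraMap (Ak k) (DualNumber (Ak k)))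
  have : IsScalarTower (Ak k) (DualNumber (Ak k)) M :=
    IsScalarTower.of_algebraMap_smul fun _ _ => rfl
  have : Module.Finite (Ak k) M := Module.Finite.trans (DualNumber (Ak k)) M
  have : Module.IsTorsionFree (Ak k) M :=
    Module.isTorsionFree_of_isSMulRegular_irreducible PowerSeries.X_irreducible hx
  -- `M` is now finite and torsion free, hence free and reflexive, over the PID `Ak k`
  refine ⟨isZero_ext_one_of_surjective_lcomp_ker_subtype fun P _ _ _ π hπ => ?_,
    bijective_dual_eval_of_isReflexive⟩
  let _ : Module (Ak k) P := Module.compHom P (algebraMap (Ak k) (DualNumber (Ak k)))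
  have : IsScalarTower (Ak k) (DualNumber (Ak k)) P :=
    IsScalarTower.of_algebraMap_smul fun _ _ => rfl
  exact dualMap_ker_subtype_surjective π hπ

end
end
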